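/- arXiv:2409.12770 — 2 statements merged into one kernel-verified Lean document; each statement's English description precedes it below -/
import Mathlib

section
/- For all integers a ≥ 2 and b with 1 ≤ b ≤ a − 1, setting c = 4a² + 2b one has R(C₄, K_{1,c}) ≤ c + ⌈√c⌉ (indeed ⌈√c⌉ = 2a + 1 for such c). -/
/-- `G` contains a subgraph isomorphic to `H`, i.e. there is an injective map of the
vertices of `H` into the vertices of `G` preserving adjacency. -/
def SimpleGraph.ContainsCopy {V W : Type*} (G : SimpleGraph V) (H : SimpleGraph W) : Prop :=
  ∃ f : W ↪ V, ∀ ⦃a b : W⦄, H.Adj a b → G.Adj (f a) (f b)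

/-- The Ramsey number `R(H₁, H₂)`: the least `N` such that every simple graph `G` on `N`
vertices contains a subgraph isomorphic to `H₁`, or its complement contains a subgraph
isomorphic to `H₂`. -/
noncomputable def ramseyNumber {V W : Type*} (H₁ : SimpleGraph V) (H₂ : SimpleGraph W) : ℕ :=
  sInf {N : ℕ | ∀ G : SimpleGraph (Fin N),
    G.ContainsCopy H₁ ∨ Gᶜ.ContainsCopy H₂}

/-- The star `K_{1,n}` on `n + 1` vertices. -/
def starGraph (n : ℕ) : SimpleGraph (Fin 1 ⊕ Fin n) := completeBipartiteGraph (Fin 1) (Fin n)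

/-! Let `G` be a graph on `N = c + 2a + 1` vertices with no `C₄` whose complement has no
`K_{1,c}`, where `c = 4a² + 2b`. Then every vertex has degree at least `2a + 1`. In a
`C₄`-free graph the sets `N(u) \ {v}` for `u ∈ N(v)` are pairwise disjoint and avoid `v`,
so `deg v · (δ - 1) < N` for the minimum degree `δ`; since `b < a` this forces `G` to be
`(2a + 1)`-regular, impossible on an odd number `N` of vertices. Finally
`(2a)² < c ≤ (2a + 1)²` gives `⌈√c⌉ = 2a + 1`. -/

namespace SimpleGraph

variable {V W : Type*} {G : SimpleGraph V}

theorem containsCopy_iff_isContained {H : SimpleGraph W} : G.ContainsCopy H ↔ H ⊑ G :=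
  ⟨fun ⟨f, hf⟩ => ⟨⟨⟨f, fun h => hf h⟩, f.injective⟩⟩,
    fun ⟨f⟩ => ⟨f.toEmbedding, fun _ _ h => f.toHom.map_adj h⟩⟩

theorem containsCopy_cycleGraph_four {v₁ v₂ v₃ v₄ : V} (h₁₂ : G.Adj v₁ v₂) (h₂₃ : G.Adj v₂ v₃)
    (h₃₄ : G.Adj v₃ v₄) (h₄₁ : G.Adj v₄ v₁) (h₁₃ : v₁ ≠ v₃) (h₂₄ : v₂ ≠ v₄) :
    G.ContainsCopy (cycleGraph 4) := by
  rw [containsCopy_iff_isContained, cycleGraph_isContained_iff (by norm_num)]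
  refine ⟨v₁, .cons h₁₂ (.cons h₂₃ (.cons h₃₄ (.cons h₄₁ .nil))), ?_, rfl⟩
  simp [Walk.cons_isCycle_iff, h₁₂.ne, h₁₂.ne', h₂₃.ne, h₃₄.ne, h₄₁.ne, h₁₃, h₁₃.symm, h₂₄]

theorem subsingleton_commonNeighbors_of_not_containsCopy_cycleGraph_four
    (hG : ¬ G.ContainsCopy (cycleGraph 4)) {u₁ u₂ : V} (hu : u₁ ≠ u₂) :
    (G.commonNeighbors u₁ u₂).Subsingleton := by
  intro v hv w hw
  by_contra hvw
  exact hG (containsCopy_cycleGraph_four hv.1 hv.2.symm hw.2 hw.1.symm hu hvw)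

section Finite

variable [Fintype V] [DecidableRel G.Adj]

theorem sum_degree_sub_one_lt_card (hG : ¬ G.ContainsCopy (cycleGraph 4)) (v : V) :
    ∑ u ∈ G.neighborFinset v, (G.degree u - 1) < Fintype.card V := by
  classical
  let S u := (G.neighborFinset u).erase v
  -- two neighbours `u₁ ≠ u₂` of `v` with a common neighbour `w ≠ v` span the 4-cycle `v u₁ w u₂`
  have hdisj : (G.neighborFinset v : Set V).PairwiseDisjoint S := by
    intro u₁ hu₁ u₂ hu₂ hu
    simp only [Finset.mem_coe, mem_neighborFinset] at hu₁ hu₂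
    refine Finset.disjoint_left.2 fun w hw₁ hw₂ => ?_
    simp only [S, Finset.mem_erase, mem_neighborFinset] at hw₁ hw₂
    exact hw₁.1 (subsingleton_commonNeighbors_of_not_containsCopy_cycleGraph_four hG hu
      ⟨hw₁.2, hw₂.2⟩ ⟨hu₁.symm, hu₂.symm⟩)
  have hcard (u) (hu : u ∈ G.neighborFinset v) : (S u).card = G.degree u - 1 := by
    rw [mem_neighborFinset] at hu
    rw [Finset.card_erase_of_mem ((G.mem_neighborFinset u v).2 hu.symm),
      card_neighborFinset_eq_degree]
  calc ∑ u ∈ G.neighborFinset v, (G.degree u - 1)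
      = ((G.neighborFinset v).biUnion S).card := by
        rw [Finset.card_biUnion hdisj]
        exact Finset.sum_congr rfl fun u hu => (hcard u hu).symm
    _ < (insert v ((G.neighborFinset v).biUnion S)).card := by
        rw [Finset.card_insert_of_notMem (by simp [S])]; omega
    _ ≤ Fintype.card V := Finset.card_le_univ _

theorem degree_mul_sub_one_lt_card (hG : ¬ G.ContainsCopy (cycleGraph 4)) {δ : ℕ}
    (hδ : ∀ u, δ ≤ G.degree u) (v : V) : G.degree v * (δ - 1) < Fintype.card V :=
  calc G.degree v * (δ - 1) = ∑ _u ∈ G.neighborFinset v, (δ - 1) := by simp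
    _ ≤ ∑ u ∈ G.neighborFinset v, (G.degree u - 1) :=
        Finset.sum_le_sum fun u _ => Nat.sub_le_sub_right (hδ u) 1
    _ < Fintype.card V := sum_degree_sub_one_lt_card hG v

theorem IsRegularOfDegree.even_card_mul {d : ℕ} (h : G.IsRegularOfDegree d) :
    Even (Fintype.card V * d) := by
  have hsum := G.sum_degrees_eq_twice_card_edges
  simp only [h.degree_eq, Finset.sum_const, Finset.card_univ, smul_eq_mul] at hsum
  exact ⟨_, hsum.trans (two_mul _)⟩

end Finite

end SimpleGraph

theorem containsCopy_starGraph_of_le_degree {V : Type*} {G : SimpleGraph V} {v : V}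
    [Fintype (G.neighborSet v)] {n : ℕ} (h : n ≤ G.degree v) : G.ContainsCopy (starGraph n) := by
  classical
  obtain ⟨s, hs, hsn⟩ := Finset.exists_subset_card_eq h
  rw [SimpleGraph.containsCopy_iff_isContained, starGraph]
  refine ⟨SimpleGraph.Copy.completeBipartiteGraph (α := Fin 1) (β := Fin n) {v} s
    (by simp) (by simpa) ?_⟩
  intro x hx y hy
  rw [Finset.coe_singleton, Set.mem_singleton_iff] at hx
  exact hx ▸ (G.mem_neighborFinset v y).1 (hs hy)

theorem compl_containsCopy_starGraph_of_degree_add_lt {V : Type*} [Fintype V] [DecidableEq V]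
    {G : SimpleGraph V} [DecidableRel G.Adj] {v : V} {n : ℕ}
    (h : G.degree v + n < Fintype.card V) : Gᶜ.ContainsCopy (starGraph n) :=
  containsCopy_starGraph_of_le_degree (v := v) (by rw [SimpleGraph.degree_compl]; omega)

theorem natCeil_sqrt_eq_of_sq_lt_of_le_sq {m n : ℕ} (h₁ : n ^ 2 < m) (h₂ : m ≤ (n + 1) ^ 2) :
    ⌈√(m : ℝ)⌉₊ = n + 1 := by
  rw [Nat.ceil_eq_iff n.add_one_ne_zero, Nat.add_sub_cancel, Real.lt_sqrt (by positivity),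
    Real.sqrt_le_left (by positivity)]
  exact ⟨by exact_mod_cast h₁, by exact_mod_cast h₂⟩

theorem ramsey_C4_star_le_of_between_squares_general (a b : ℕ) (hb1 : 1 ≤ b)
    (hb2 : b ≤ a - 1) :
    ramseyNumber (SimpleGraph.cycleGraph 4) (starGraph (4 * a ^ 2 + 2 * b))
        ≤ (4 * a ^ 2 + 2 * b) + ⌈Real.sqrt ((4 * a ^ 2 + 2 * b : ℕ) : ℝ)⌉₊
      ∧ ⌈Real.sqrt ((4 * a ^ 2 + 2 * b : ℕ) : ℝ)⌉₊ = 2 * a + 1 := by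
  have hceil : ⌈Real.sqrt ((4 * a ^ 2 + 2 * b : ℕ) : ℝ)⌉₊ = 2 * a + 1 :=
    natCeil_sqrt_eq_of_sq_lt_of_le_sq (by ring_nf; omega) (by ring_nf; omega)
  refine ⟨?_, hceil⟩
  rw [hceil]
  refine Nat.sInf_le fun G => ?_
  classical
  by_contra! ⟨hC4, hstar⟩
  have hmin (v) : 2 * a + 1 ≤ G.degree v := by
    by_contra! hv
    exact hstar (compl_containsCopy_starGraph_of_degree_add_lt (v := v)
      (by rw [Fintype.card_fin]; omega))
  have hreg : G.IsRegularOfDegree (2 * a + 1) := fun v => by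
    refine le_antisymm ?_ (hmin v)
    by_contra! hv
    have hcount := G.degree_mul_sub_one_lt_card hC4 hmin v
    rw [Fintype.card_fin, Nat.add_sub_cancel] at hcount
    nlinarith [Nat.mul_le_mul_right (2 * a) hv, show b + 1 ≤ a by omega]
  have hodd : Odd ((4 * a ^ 2 + 2 * b + (2 * a + 1)) * (2 * a + 1)) :=
    Nat.odd_mul.2 ⟨⟨2 * a ^ 2 + b + a, by ring⟩, odd_two_mul_add_one a⟩
  exact Nat.not_even_iff_odd.2 hodd (by simpa using hreg.even_card_mul)

/-- For integers `a ≥ 2` and `1 ≤ b ≤ a − 1`, with `c = 4a² + 2b` one has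
`R(C₄, K_{1,c}) ≤ c + ⌈√c⌉`, and indeed `⌈√c⌉ = 2a + 1`. -/
theorem ramsey_C4_star_le_of_between_squares (a b : ℕ) (ha : 2 ≤ a) (hb1 : 1 ≤ b)
    (hb2 : b ≤ a - 1) :
    ramseyNumber (SimpleGraph.cycleGraph 4) (starGraph (4 * a ^ 2 + 2 * b))
        ≤ (4 * a ^ 2 + 2 * b) + ⌈Real.sqrt ((4 * a ^ 2 + 2 * b : ℕ) : ℝ)⌉₊
      ∧ ⌈Real.sqrt ((4 * a ^ 2 + 2 * b : ℕ) : ℝ)⌉₊ = 2 * a + 1 :=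
  ramsey_C4_star_le_of_between_squares_general a b hb1 hb2
end

section
/- For every natural number n ≥ 2, if R(C₄, K_{1,n}) > R(C₄, K_{1,n−1}), then R(C₄, K_{1, 2n+1−R(C₄,K_{1,n})}) ≥ n. -/
/-!
Let `r = R(C₄, K_{1,n})` and let `G` be a `C₄`-free graph on `r - 1` vertices whose
complement contains no `K_{1,n}`, so that every vertex has at most `n - 1` non-neighbours.
Since `r - 1 ≥ R(C₄, K_{1,n-1})`, some vertex `v` has exactly `n - 1` non-neighbours; call this
set `T`. A vertex `x ∈ T` is not adjacent to `v`, so by `C₄`-freeness it has at most one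
neighbour outside `T`; having at least `r - n - 1` neighbours, it has at most `2n - r`
non-neighbours inside `T`. Hence `G[T]` is a `C₄`-free graph on `n - 1` vertices whose
complement contains no `K_{1,2n+1-r}`, and `R(C₄, K_{1,2n+1-r}) > n - 1`.
-/

open SimpleGraph hiding starGraph
open Finset

theorem SimpleGraph.containsCopy_iff_isContained_s8 {V W : Type*} {G : SimpleGraph V}
    {H : SimpleGraph W} : G.ContainsCopy H ↔ H ⊑ G :=
  isContained_iff_exists_le_comap.symm

namespace SimpleGraph

variable {V : Type*} {G : SimpleGraph V}

def cycleGraphFourIsoCompleteBipartiteGraph :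
    cycleGraph 4 ≃g completeBipartiteGraph (Fin 2) (Fin 2) where
  toFun := ![.inl 0, .inr 0, .inl 1, .inr 1]
  invFun := Sum.elim ![0, 2] ![1, 3]
  left_inv := by decide
  right_inv := by decide
  map_rel_iff' {a b} := by fin_cases a <;> fin_cases b <;> simp [cycleGraph_adj] <;> decide

theorem cycleGraph_four_isContained_iff : cycleGraph 4 ⊑ G ↔
    ∃ left right : Finset V, #left = 2 ∧ #right = 2 ∧ G.IsCompleteBetween left right := by
  rw [isContained_congr_left cycleGraphFourIsoCompleteBipartiteGraph,
    completeBipartiteGraph_isContained_iff]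
  simp

theorem starGraph_isContained_iff {m : ℕ} :
    _root_.starGraph m ⊑ G ↔ ∃ (v : V) (s : Finset V), #s = m ∧ ∀ u ∈ s, G.Adj v u := by
  simp only [_root_.starGraph, completeBipartiteGraph_isContained_iff, Fintype.card_fin,
    card_eq_one]
  constructor
  · rintro ⟨_, s, ⟨v, rfl⟩, hs, h⟩
    exact ⟨v, s, hs, fun u hu => h (by simp) hu⟩
  · rintro ⟨v, s, hs, h⟩
    exact ⟨{v}, s, ⟨v, rfl⟩, hs, fun w hw u hu => by simp_all⟩

theorem compl_induce (s : Set V) : (G.induce s)ᶜ = Gᶜ.induce s := by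
  ext ⟨a, _⟩ ⟨b, _⟩
  simp

theorem Free.induce {W : Type*} {H : SimpleGraph W} (hG : H.Free G) (s : Set V) :
    H.Free (G.induce s) :=
  fun h => hG (h.trans (Copy.induce G s).isContained)

section Finite

variable [Fintype V] [DecidableRel G.Adj]

theorem starGraph_isContained_iff_exists_le_degree {m : ℕ} :
    _root_.starGraph m ⊑ G ↔ ∃ v, m ≤ G.degree v := by
  rw [starGraph_isContained_iff]
  constructor
  · rintro ⟨v, s, rfl, hs⟩
    exact ⟨v, card_le_card fun u hu => (mem_neighborFinset ..).mpr (hs u hu)⟩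
  · rintro ⟨v, hv⟩
    obtain ⟨s, hs, rfl⟩ := exists_subset_card_eq hv
    exact ⟨v, s, rfl, fun u hu => (mem_neighborFinset ..).mp (hs hu)⟩

theorem degree_compl_add_degree_add_one [DecidableEq V] (v : V) :
    Gᶜ.degree v + G.degree v + 1 = Fintype.card V := by
  have := G.degree_lt_card_verts v
  rw [degree_compl]
  omega

variable [DecidableEq V]

theorem Free.card_neighborFinset_inter_le_one (hG : (cycleGraph 4).Free G) {a b : V}
    (hab : a ≠ b) : #(G.neighborFinset a ∩ G.neighborFinset b) ≤ 1 := by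
  refine card_le_one.mpr fun w hw w' hw' => ?_
  by_contra hww
  simp only [mem_inter, mem_neighborFinset] at hw hw'
  refine hG (cycleGraph_four_isContained_iff.mpr
    ⟨{a, b}, {w, w'}, card_pair hab, card_pair hww, ?_⟩)
  simp [IsCompleteBetween, hw, hw']

theorem Free.degree_add_degree_le (hG : (cycleGraph 4).Free G) {a b : V} (hab : a ≠ b) :
    G.degree a + G.degree b ≤ Fintype.card V + 1 := by
  have := card_union_add_card_inter (G.neighborFinset a) (G.neighborFinset b)
  have := card_le_univ (G.neighborFinset a ∪ G.neighborFinset b)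
  have := hG.card_neighborFinset_inter_le_one hab
  simp only [card_neighborFinset_eq_degree] at *
  omega

theorem Free.degree_le_card_neighborFinset_inter_add_one (hG : (cycleGraph 4).Free G)
    {v x : V} (hx : Gᶜ.Adj v x) :
    G.degree x ≤ #(G.neighborFinset x ∩ Gᶜ.neighborFinset v) + 1 := by
  have hout : G.neighborFinset x \ Gᶜ.neighborFinset v ⊆
      G.neighborFinset x ∩ G.neighborFinset v := by
    intro y hy
    simp only [mem_sdiff, mem_inter, mem_neighborFinset, compl_adj, not_and, not_not] at hy ⊢
    exact ⟨hy.1, hy.2 fun hvy => hx.2 (hvy ▸ hy.1.symm)⟩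
  have := card_inter_add_card_sdiff (G.neighborFinset x) (Gᶜ.neighborFinset v)
  have := (card_le_card hout).trans (hG.card_neighborFinset_inter_le_one hx.1.symm)
  rw [card_neighborFinset_eq_degree] at *
  omega

theorem card_neighborFinset_inter_add_card_compl_neighborFinset_inter {s : Finset V} {x : V}
    (hx : x ∈ s) : #(G.neighborFinset x ∩ s) + #(Gᶜ.neighborFinset x ∩ s) + 1 = #s := by
  have hcompl : Gᶜ.neighborFinset x ∩ s = (s \ G.neighborFinset x).erase x := by
    ext y
    simp only [mem_inter, mem_neighborFinset, compl_adj, mem_erase, mem_sdiff]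
    tauto
  have := card_inter_add_card_sdiff s (G.neighborFinset x)
  have := card_erase_add_one (s := s \ G.neighborFinset x) (a := x) (by simpa using hx)
  rw [hcompl, inter_comm]
  omega

theorem exists_le_card_neighborFinset_inter_of_starGraph_isContained_induce {s : Finset V}
    {m : ℕ} (h : _root_.starGraph m ⊑ G.induce s) :
    ∃ x ∈ s, m ≤ #(G.neighborFinset x ∩ s) := by
  obtain ⟨⟨x, hx⟩, t, rfl, ht⟩ := starGraph_isContained_iff.mp h
  refine ⟨x, hx, (card_map (Function.Embedding.subtype _)).symm.le.trans (card_le_card ?_)⟩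
  intro y hy
  obtain ⟨⟨y, hys⟩, hyt, rfl⟩ := mem_map.mp hy
  exact mem_inter.mpr ⟨(mem_neighborFinset ..).mpr (ht _ hyt), hys⟩

theorem Free.starGraph_free_compl_induce (hG : (cycleGraph 4).Free G) {v : V}
    (hmax : ∀ u, Gᶜ.degree u ≤ Gᶜ.degree v) {m : ℕ}
    (hm : 2 * Gᶜ.degree v + 2 ≤ Fintype.card V + m) :
    (_root_.starGraph m).Free (G.induce (Gᶜ.neighborSet v))ᶜ := by
  intro h
  rw [compl_induce, ← coe_neighborFinset] at h
  obtain ⟨x, hx, hmx⟩ := exists_le_card_neighborFinset_inter_of_starGraph_isContained_induce h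
  have hsplit := card_neighborFinset_inter_add_card_compl_neighborFinset_inter (G := G) hx
  have hdeg :=
    hG.degree_le_card_neighborFinset_inter_add_one ((mem_neighborFinset ..).mp hx)
  have hcard := G.degree_compl_add_degree_add_one x
  have hmax_x := hmax x
  rw [card_neighborFinset_eq_degree] at hsplit
  omega

end Finite

end SimpleGraph

section Ramsey

variable {V W : Type*} {H₁ : SimpleGraph V} {H₂ : SimpleGraph W}

theorem ramseyNumber_eq_sInf : ramseyNumber H₁ H₂ =
    sInf {N | ∀ G : SimpleGraph (Fin N), H₁ ⊑ G ∨ H₂ ⊑ Gᶜ} := by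
  simp only [ramseyNumber, containsCopy_iff_isContained_s8]

theorem exists_free_of_lt_ramseyNumber {N : ℕ} (h : N < ramseyNumber H₁ H₂) :
    ∃ G : SimpleGraph (Fin N), H₁.Free G ∧ H₂.Free Gᶜ := by
  rw [ramseyNumber_eq_sInf] at h
  simpa [not_or] using Nat.notMem_of_lt_sInf h

-- `hR` excludes the junk value `ramseyNumber H₁ H₂ = sInf ∅ = 0`.
theorem card_lt_ramseyNumber {X : Type*} [Fintype X]
    (hR : ∃ N, ∀ G : SimpleGraph (Fin N), H₁ ⊑ G ∨ H₂ ⊑ Gᶜ) {G : SimpleGraph X}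
    (h₁ : H₁.Free G) (h₂ : H₂.Free Gᶜ) : Fintype.card X < ramseyNumber H₁ H₂ := by
  by_contra! hle
  obtain ⟨f⟩ : Nonempty (Fin (ramseyNumber H₁ H₂) ↪ X) :=
    Function.Embedding.nonempty_of_card_le (by simpa using hle)
  have hR' : ∀ G : SimpleGraph (Fin (ramseyNumber H₁ H₂)), H₁ ⊑ G ∨ H₂ ⊑ Gᶜ := by
    rw [ramseyNumber_eq_sInf]
    exact Nat.sInf_mem hR
  rcases hR' (G.comap f) with h | h
  · exact h₁ (h.trans (Embedding.comap f G).isContained)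
  · exact h₂ (h.trans (Embedding.complEquiv (Embedding.comap f G)).isContained)

theorem cycleGraph_four_isContained_or_starGraph_isContained_compl (m : ℕ)
    (G : SimpleGraph (Fin (2 * m + 2))) : cycleGraph 4 ⊑ G ∨ starGraph m ⊑ Gᶜ := by
  classical
  rw [or_iff_not_imp_right, starGraph_isContained_iff_exists_le_degree]
  intro hstar
  push Not at hstar
  by_contra hC4
  have := Free.degree_add_degree_le hC4 (a := ⟨0, by omega⟩) (b := ⟨1, by omega⟩) (by simp)
  have := G.degree_compl_add_degree_add_one ⟨0, by omega⟩
  have := G.degree_compl_add_degree_add_one ⟨1, by omega⟩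
  have := hstar ⟨0, by omega⟩
  have := hstar ⟨1, by omega⟩
  simp only [Fintype.card_fin] at *
  omega

end Ramsey

theorem ramsey_C4_star_ge_of_increase_general (n : ℕ)
    (h : ramseyNumber (SimpleGraph.cycleGraph 4) (starGraph (n - 1))
        < ramseyNumber (SimpleGraph.cycleGraph 4) (starGraph n)) :
    n ≤ ramseyNumber (SimpleGraph.cycleGraph 4)
        (starGraph (2 * n + 1 - ramseyNumber (SimpleGraph.cycleGraph 4) (starGraph n))) := by
  classical
  obtain ⟨G, hC4, hstar⟩ := exists_free_of_lt_ramseyNumber (Nat.sub_one_lt_of_lt h)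
  have hdeg (u : Fin _) : Gᶜ.degree u < n :=
    not_le.mp fun hle => hstar (starGraph_isContained_iff_exists_le_degree.mpr ⟨u, hle⟩)
  obtain ⟨v, hv⟩ : ∃ v, n - 1 ≤ Gᶜ.degree v := by
    rw [← starGraph_isContained_iff_exists_le_degree]
    by_contra hfree
    have := card_lt_ramseyNumber
      ⟨_, cycleGraph_four_isContained_or_starGraph_isContained_compl (n - 1)⟩ hC4 hfree
    rw [Fintype.card_fin] at this
    omega
  have hmax (u : Fin _) : Gᶜ.degree u ≤ Gᶜ.degree v :=
    (Nat.le_sub_one_of_lt (hdeg u)).trans hv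
  have hfree := hC4.starGraph_free_compl_induce hmax
    (m := 2 * n + 1 - ramseyNumber (cycleGraph 4) (starGraph n))
    (by rw [Fintype.card_fin]; have := hdeg v; omega)
  have hcard := card_lt_ramseyNumber
    ⟨_, cycleGraph_four_isContained_or_starGraph_isContained_compl _⟩ (hC4.induce _) hfree
  rw [card_neighborSet_eq_degree] at hcard
  have := hdeg v
  omega

/-- For `n ≥ 2`, if `R(C₄, K_{1,n}) > R(C₄, K_{1,n−1})`, then
`R(C₄, K_{1, 2n+1−R(C₄,K_{1,n})}) ≥ n`. -/
theorem ramsey_C4_star_ge_of_increase (n : ℕ) (hn : 2 ≤ n)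
    (h : ramseyNumber (SimpleGraph.cycleGraph 4) (starGraph (n - 1))
        < ramseyNumber (SimpleGraph.cycleGraph 4) (starGraph n)) :
    n ≤ ramseyNumber (SimpleGraph.cycleGraph 4)
        (starGraph (2 * n + 1 - ramseyNumber (SimpleGraph.cycleGraph 4) (starGraph n))) :=
  ramsey_C4_star_ge_of_increase_general n h
end
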